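/- Let A be a symmetric positive semidefinite n×n real matrix, F : ℝⁿ → ℝ a C¹ function with f = ∇F Lipschitz with constant L, and E(u) = ½⟨Au, u⟩ + F(u). For the stabilized semi-implicit scheme (u^{k+1} − u^k)/Δt + S(u^{k+1} − u^k) + A u^{k+1} + f(u^k) = 0 with stabilization parameter S ≥ L/2, the scheme is unconditionally energy diminishing: E(u^{k+1}) ≤ E(u^k) for every Δt > 0. -/

import Mathlib

/-!
Test the scheme against `v = u' - u`: it gives `⟪A u', v⟫ + ⟪f u, v⟫ = -(Δt⁻¹ + S) ‖v‖²`.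
Symmetry and positivity of `A` give `½⟪A u', u'⟫ - ½⟪A u, u⟫ ≤ ⟪A u', v⟫`, and the descent lemma
for the `L`-Lipschitz gradient gives `F u' ≤ F u + ⟪f u, v⟫ + L/2 ‖v‖²`. Adding up,
`E u' - E u ≤ -(Δt⁻¹ + S - L/2) ‖v‖² ≤ 0`.
-/

open scoped RealInnerProductSpace NNReal

section

variable {V : Type*} [NormedAddCommGroup V] [InnerProductSpace ℝ V]

theorem LinearMap.IsPositive.inner_map_self_sub_inner_map_self_le {T : V →ₗ[ℝ] V}
    (hT : T.IsPositive) (x y : V) : ⟪T y, y⟫ - ⟪T x, x⟫ ≤ 2 * ⟪T y, y - x⟫ := by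
  have hsymm : ⟪T x, y⟫ = ⟪T y, x⟫ := by rw [hT.isSymmetric, real_inner_comm]
  have hnonneg := hT.inner_nonneg_left (y - x)
  simp only [map_sub, inner_sub_left, inner_sub_right] at hsymm hnonneg ⊢
  linarith

theorem LipschitzWith.inner_sub_add_smul_le {f : V → V} {L : ℝ≥0} (hf : LipschitzWith L f)
    (x v : V) {t : ℝ} (ht : 0 ≤ t) : ⟪f (x + t • v) - f x, v⟫ ≤ L * t * ‖v‖ ^ 2 :=
  calc ⟪f (x + t • v) - f x, v⟫ ≤ ‖f (x + t • v) - f x‖ * ‖v‖ := real_inner_le_norm _ _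
    _ ≤ L * ‖t • v‖ * ‖v‖ := by
      gcongr
      simpa [dist_eq_norm] using hf.dist_le_mul (x + t • v) x
    _ = L * t * ‖v‖ ^ 2 := by rw [norm_smul, Real.norm_of_nonneg ht]; ring

variable [CompleteSpace V]

theorem HasGradientAt.hasDerivAt_comp_add_smul {F : V → ℝ} {g x v : V} {t : ℝ}
    (hF : HasGradientAt F g (x + t • v)) :
    HasDerivAt (fun s : ℝ => F (x + s • v)) ⟪g, v⟫ t := by
  have hline : HasDerivAt (fun s : ℝ => x + s • v) v t := by
    simpa using ((hasDerivAt_id t).smul_const v).const_add x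
  simpa [InnerProductSpace.toDual_apply_apply, Function.comp_def] using
    hF.hasFDerivAt.comp_hasDerivAt t hline

theorem le_add_inner_add_of_hasGradientAt_of_lipschitzWith {F : V → ℝ} {f : V → V}
    (hgrad : ∀ x, HasGradientAt F (f x) x) {L : ℝ≥0} (hf : LipschitzWith L f) (x v : V) :
    F (x + v) ≤ F x + ⟪f x, v⟫ + L / 2 * ‖v‖ ^ 2 := by
  set g : ℝ → ℝ := fun t => F (x + t • v) - t * ⟪f x, v⟫ - L / 2 * t ^ 2 * ‖v‖ ^ 2
  have hg : ∀ t, HasDerivAt g (⟪f (x + t • v) - f x, v⟫ - L * t * ‖v‖ ^ 2) t := by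
    intro t
    refine HasDerivAt.congr_deriv
      ((((hgrad (x + t • v)).hasDerivAt_comp_add_smul).sub ((hasDerivAt_id t).mul_const _)).sub
        (((hasDerivAt_pow 2 t).const_mul ((L : ℝ) / 2)).mul_const (‖v‖ ^ 2))) ?_
    rw [inner_sub_left]
    ring
  have hanti : AntitoneOn g (Set.Ici 0) := by
    refine antitoneOn_of_hasDerivWithinAt_nonpos (convex_Ici 0)
      (fun t _ => (hg t).continuousAt.continuousWithinAt) (fun t _ => (hg t).hasDerivWithinAt) ?_
    intro t ht
    rw [interior_Ici] at ht
    linarith [hf.inner_sub_add_smul_le x v (le_of_lt ht)]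
  have hg01 := hanti Set.self_mem_Ici (Set.mem_Ici.2 zero_le_one) zero_le_one
  simp only [g, one_smul, zero_smul, add_zero] at hg01
  linarith

theorem energy_le_of_stabilized_step {T : V →ₗ[ℝ] V} (hT : T.IsPositive) {F : V → ℝ} {f : V → V}
    (hgrad : ∀ x, HasGradientAt F (f x) x) {L : ℝ≥0} (hf : LipschitzWith L f)
    {S τ : ℝ} (hS : (L : ℝ) / 2 ≤ S) (hτ : 0 ≤ τ) {u u' : V}
    (hstep : τ⁻¹ • (u' - u) + S • (u' - u) + T u' + f u = 0) :
    1 / 2 * ⟪T u', u'⟫ + F u' ≤ 1 / 2 * ⟪T u, u⟫ + F u := by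
  have hdescent := le_add_inner_add_of_hasGradientAt_of_lipschitzWith hgrad hf u (u' - u)
  rw [add_sub_cancel] at hdescent
  have hquad := hT.inner_map_self_sub_inner_map_self_le u u'
  have hstep_inner : ⟪T u', u' - u⟫ + ⟪f u, u' - u⟫ = -((τ⁻¹ + S) * ‖u' - u‖ ^ 2) := by
    have : T u' + f u = -((τ⁻¹ + S) • (u' - u)) := by
      rw [add_smul]; exact eq_neg_of_add_eq_zero_right (by rwa [← add_assoc])
    rw [← inner_add_left, this, inner_neg_left, real_inner_smul_left, real_inner_self_eq_norm_sq]
  have hS' : 0 ≤ (S - L / 2) * ‖u' - u‖ ^ 2 := mul_nonneg (by linarith) (sq_nonneg _)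
  have hτ' : 0 ≤ τ⁻¹ * ‖u' - u‖ ^ 2 := mul_nonneg (inv_nonneg.2 hτ) (sq_nonneg _)
  linarith

end

/-- the stabilized semi-implicit scheme
`(u' − u)/Δt + S(u' − u) + A u' + f(u) = 0` with `S ≥ L/2` is unconditionally
energy diminishing: `E(u') ≤ E(u)` for every `Δt > 0`. -/
theorem stabilized_semiImplicit_energy_diminishing
    {n : ℕ} (A : Matrix (Fin n) (Fin n) ℝ) (hA : A.PosSemidef)
    (F : EuclideanSpace ℝ (Fin n) → ℝ) (f : EuclideanSpace ℝ (Fin n) → EuclideanSpace ℝ (Fin n))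
    (hgrad : ∀ x, HasGradientAt F (f x) x)
    (L : NNReal) (hf : LipschitzWith L f)
    (S : ℝ) (hS : (L : ℝ) / 2 ≤ S)
    (E : EuclideanSpace ℝ (Fin n) → ℝ)
    (hE : ∀ u, E u = (1 / 2) * ⟪Matrix.toEuclideanLin A u, u⟫ + F u)
    (Δt : ℝ) (hΔt : 0 < Δt)
    (u u' : EuclideanSpace ℝ (Fin n))
    (hscheme : Δt⁻¹ • (u' - u) + S • (u' - u) + Matrix.toEuclideanLin A u' + f u = 0) :
    E u' ≤ E u := by
  rw [hE, hE]
  exact energy_le_of_stabilized_step (Matrix.isPositive_toEuclideanLin_iff.2 hA) hgrad hf hS hΔt.le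
    hscheme
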